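/- Let R be a finite local commutative ring with nonorientable genus of Γ(R, S) equal to 1, for some S ⊆ U(R) with S⁻¹ ⊆ S. Then |R| ≤ 9, and if R is a field then |R| ≤ 7. -/

import Mathlib

namespace CrosscapDef

open SimpleGraph

variable {V : Type*}

/-- An embedding scheme (rotation system together with an edge signature) for a simple
graph `G`: `rot` cyclically permutes the darts around each vertex (a single cycle at every
vertex), and `sgn d = true` means the edge of `d` is orientation-reversing. -/
structure Scheme {V : Type*} (G : SimpleGraph V) where
  rot : Equiv.Perm G.Dart
  rot_fst : ∀ d : G.Dart, (rot d).toProd.1 = d.toProd.1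
  rot_single : ∀ d e : G.Dart, d.toProd.1 = e.toProd.1 → rot.SameCycle d e
  sgn : G.Dart → Bool
  sgn_symm : ∀ d : G.Dart, sgn d.symm = sgn d

/-- Crossing an edge: reverse the dart and flip the local orientation according to the
signature. -/
def Scheme.flip {G : SimpleGraph V} (σ : Scheme G) : Equiv.Perm (G.Dart × Bool) :=
  Function.Involutive.toPerm (fun p => (p.1.symm, xor p.2 (σ.sgn p.1)))
    (by
      rintro ⟨d, s⟩
      simp [SimpleGraph.Dart.symm_symm, σ.sgn_symm, Bool.xor_assoc])

/-- Turning around a vertex: apply the rotation or its inverse, depending on the current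
local orientation. -/
def Scheme.step {G : SimpleGraph V} (σ : Scheme G) : Equiv.Perm (G.Dart × Bool) where
  toFun p := (cond p.2 (σ.rot p.1) (σ.rot.symm p.1), p.2)
  invFun p := (cond p.2 (σ.rot.symm p.1) (σ.rot p.1), p.2)
  left_inv := by rintro ⟨d, s⟩; cases s <;> simp
  right_inv := by rintro ⟨d, s⟩; cases s <;> simp

/-- The face-tracing permutation of an embedding scheme. -/
def Scheme.facePerm {G : SimpleGraph V} (σ : Scheme G) : Equiv.Perm (G.Dart × Bool) :=
  σ.step * σ.flip

/-- The number of cycles (orbits) of a permutation. -/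
noncomputable def cycleCount {α : Type*} (f : Equiv.Perm α) : ℕ :=
  Nat.card (Quotient (Setoid.mk f.SameCycle
    ⟨fun _ => Equiv.Perm.SameCycle.rfl, Equiv.Perm.SameCycle.symm, Equiv.Perm.SameCycle.trans⟩))

/-- The number of faces of an embedding scheme: each face is traced twice by `facePerm`. -/
noncomputable def Scheme.faceCount {G : SimpleGraph V} (σ : Scheme G) : ℕ :=
  cycleCount σ.facePerm / 2

/-- The Euler genus `2 - v + e - f` of (the surface of) an embedding scheme of a connected
graph. -/
noncomputable def Scheme.eulerGenus {G : SimpleGraph V} (σ : Scheme G) : ℤ :=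
  2 - (Nat.card V : ℤ) + ((Nat.card G.Dart / 2 : ℕ) : ℤ) - (σ.faceCount : ℤ)

/-- An embedding scheme is orientable iff its signature is switching-equivalent to the
all-positive signature. -/
def Scheme.Orientable {G : SimpleGraph V} (σ : Scheme G) : Prop :=
  ∃ f : V → Bool, ∀ d : G.Dart, σ.sgn d = xor (f d.toProd.1) (f d.toProd.2)

/-- `G` embeds in the sphere with `k` crosscaps: some connected supergraph of `G` (on the same
vertex set) has a cellular embedding scheme whose surface is the sphere with `k` crosscaps. -/
def EmbedsWithCrosscaps (G : SimpleGraph V) (k : ℕ) : Prop :=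
  ∃ H : SimpleGraph V, G ≤ H ∧ H.Preconnected ∧
    ∃ σ : Scheme H, σ.eulerGenus = (k : ℤ) ∧ (k = 0 ∨ ¬ σ.Orientable)

/-- `G` embeds in the sphere with `g` handles (an orientable surface of genus `g`). -/
def EmbedsWithHandles (G : SimpleGraph V) (g : ℕ) : Prop :=
  ∃ H : SimpleGraph V, G ≤ H ∧ H.Preconnected ∧
    ∃ σ : Scheme H, σ.eulerGenus = (2 * g : ℤ) ∧ σ.Orientable

/-- The nonorientable genus (crosscap number) of a finite graph: the least `k` such that `G`
embeds in the sphere with `k` crosscaps. -/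
noncomputable def crosscap (G : SimpleGraph V) : ℕ :=
  sInf {k : ℕ | EmbedsWithCrosscaps G k}

/-- The (orientable) genus of a finite graph. -/
noncomputable def genus (G : SimpleGraph V) : ℕ :=
  sInf {g : ℕ | EmbedsWithHandles G g}

/-- The nonorientable genus of an arbitrary (possibly infinite) graph: the supremum of the
nonorientable genera of its finite (induced) subgraphs. -/
noncomputable def crosscapE (G : SimpleGraph V) : ℕ∞ :=
  ⨆ s : Finset V, (crosscap (G.induce (s : Set V)) : ℕ∞)

end CrosscapDef

namespace CrosscapDef
/-- The generalized unit and unitary Cayley graph `Γ(R, G, S)`: vertices are the elements of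
`R`, and distinct `x`, `y` are adjacent iff `x + s*y` is a unit belonging to `G` for some
`s ∈ S`. -/
def gammaGraph (R : Type*) [CommRing R] (G : Subgroup Rˣ) (S : Set Rˣ)
    (hSG : S ⊆ (G : Set Rˣ)) (hS : S⁻¹ ⊆ S) : SimpleGraph R where
  Adj x y := x ≠ y ∧ ∃ s ∈ S, ∃ u ∈ G, (u : R) = x + (s : Rˣ) * y
  symm := by
    constructor
    rintro x y ⟨hxy, s, hs, u, hu, h⟩
    refine ⟨hxy.symm, s⁻¹, hS (by simpa using hs), s⁻¹ * u,
      mul_mem (inv_mem (hSG hs)) hu, ?_⟩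
    have h1 : ((s⁻¹ : Rˣ) : R) * (s : R) = 1 := Units.inv_mul s
    calc ((s⁻¹ * u : Rˣ) : R) = ((s⁻¹ : Rˣ) : R) * ((u : Rˣ) : R) := Units.val_mul _ _
      _ = ((s⁻¹ : Rˣ) : R) * (x + (s : Rˣ) * y) := by rw [h]
      _ = y + ((s⁻¹ : Rˣ) : R) * x := by rw [mul_add, ← mul_assoc, h1]; ring
  loopless := ⟨fun x h => h.1 rfl⟩

/-- The graph `Γ(R, S) = Γ(R, U(R), S)`. -/
def unitGammaGraph (R : Type*) [CommRing R] (S : Set Rˣ) (hS : S⁻¹ ⊆ S) : SimpleGraph R :=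
  gammaGraph R ⊤ S (fun x _ => by simp) hS

/-- The co-maximal graph of `R`: distinct `x`, `y` are adjacent iff `Rx + Ry = R`. -/
def comaximalGraph (R : Type*) [CommRing R] : SimpleGraph R where
  Adj x y := x ≠ y ∧ Ideal.span {x} ⊔ Ideal.span {y} = ⊤
  symm := by constructor; rintro x y ⟨h1, h2⟩; exact ⟨h1.symm, by rwa [sup_comm]⟩
  loopless := ⟨fun x h => h.1 rfl⟩

end CrosscapDef

/-!
If `S ≠ ∅`, every `x` is adjacent in `Γ(R, S)` to `s⁻¹ (u - x)` for all units `u` but at most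
one, so all degrees are at least `|U(R)| - 1`. In a cellular embedding in the projective plane
whose rotation fixes no dart, every face has length at least three, and Euler's formula then
gives `2e ≤ 6v - 6`; hence some vertex has degree at most five and `|U(R)| ≤ 6`. For a field
`|R| = |U(R)| + 1`; in general `|R| = |U(R)| + |m|` with `|m|` a proper divisor of the prime power
`|R|`, which leaves `|R| ≤ 9`. If `S = ∅` the graph is edgeless, and a spanning star embedded in
the sphere shows that its nonorientable genus is `0`.
-/

namespace IsLocalRing

variable {R : Type*} [CommRing R]

theorem not_isUnit_natCast_of_prime_dvd_card [Finite R] {p : ℕ} (hp : p.Prime)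
    (hpR : p ∣ Nat.card R) : ¬ IsUnit (p : R) := by
  have := Fact.mk hp
  obtain ⟨x, hx⟩ := exists_prime_addOrderOf_dvd_card' (G := R) p hpR
  have hx0 : x ≠ 0 := by rintro rfl; simp [hp.ne_one.symm] at hx
  intro hu
  exact hx0 (hu.mul_right_eq_zero.mp (by rw [← nsmul_eq_mul, ← hx, addOrderOf_nsmul_eq_zero]))

variable [IsLocalRing R]

/-- Two distinct primes dividing `|R|` would both be non-units, yet they generate the unit
ideal. -/
theorem eq_of_prime_dvd_card [Finite R] {p q : ℕ} (hp : p.Prime) (hq : q.Prime)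
    (hpR : p ∣ Nat.card R) (hqR : q ∣ Nat.card R) : p = q := by
  by_contra hpq
  obtain ⟨a, b, hab⟩ := Nat.isCoprime_iff_coprime.mpr ((Nat.coprime_primes hp hq).mpr hpq)
  have h1 : (a : R) * p + (b : R) * q = 1 := by exact_mod_cast congrArg (Int.cast : ℤ → R) hab
  rcases isUnit_or_isUnit_of_add_one h1 with h | h
  · exact not_isUnit_natCast_of_prime_dvd_card hp hpR (isUnit_of_mul_isUnit_right h)
  · exact not_isUnit_natCast_of_prime_dvd_card hq hqR (isUnit_of_mul_isUnit_right h)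

variable (R)

theorem card_units_add_card_maximalIdeal [Finite R] :
    Nat.card Rˣ + Nat.card (maximalIdeal R) = Nat.card R := by
  classical
  rw [Nat.card_congr (Equiv.ofInjective _ Units.val_injective),
    ← Nat.card_congr (Equiv.sumCompl (· ∈ Set.range ((↑) : Rˣ → R))), Nat.card_sum]
  rfl

theorem card_maximalIdeal_dvd_card : Nat.card (maximalIdeal R) ∣ Nat.card R :=
  (maximalIdeal R).toAddSubgroup.card_addSubgroup_dvd_card

theorem card_maximalIdeal_of_isField (hR : IsField R) : Nat.card (maximalIdeal R) = 1 := by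
  rw [isField_iff_maximalIdeal_eq.mp hR]
  exact Nat.card_unique

variable {R}

/-- `|m|` is a proper divisor of `|R| = |U(R)| + |m|`, so `|R| ≤ 2 |U(R)| ≤ 12`; the only
candidates above `9` are `10` and `12`, which are not prime powers. -/
theorem card_le_nine_of_card_units_le_six [Finite R] (hU : Nat.card Rˣ ≤ 6) : Nat.card R ≤ 9 := by
  have hsum := card_units_add_card_maximalIdeal R
  obtain ⟨k, hk⟩ := card_maximalIdeal_dvd_card R
  have hU0 : 0 < Nat.card Rˣ := Nat.card_pos
  have h25 : ¬ (2 ∣ Nat.card R ∧ 5 ∣ Nat.card R) := fun ⟨h2, h5⟩ =>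
    absurd (eq_of_prime_dvd_card Nat.prime_two (by norm_num) h2 h5) (by norm_num)
  have h23 : ¬ (2 ∣ Nat.card R ∧ 3 ∣ Nat.card R) := fun ⟨h2, h3⟩ =>
    absurd (eq_of_prime_dvd_card Nat.prime_two Nat.prime_three h2 h3) (by norm_num)
  by_contra! hR
  have hk2 : 2 ≤ k := by
    by_contra! hk1
    interval_cases k <;> omega
  have hm : Nat.card (maximalIdeal R) ≤ 6 := by
    nlinarith
  interval_cases h : Nat.card (maximalIdeal R) <;> omega

end IsLocalRing

namespace CrosscapDef

open SimpleGraph Equiv Finset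

variable {V : Type*} {G H : SimpleGraph V}

section CycleCount

variable {α : Type*}

theorem three_mul_cycleCount_le [Finite α] (f : Perm α) (h1 : ∀ x, f x ≠ x)
    (h2 : ∀ x, f (f x) ≠ x) : 3 * cycleCount f ≤ Nat.card α := by
  classical
  have := Fintype.ofFinite α
  unfold cycleCount
  rw [Nat.card_eq_fintype_card, Nat.card_eq_fintype_card, ← card_univ, ← card_univ]
  refine mul_card_image_le_card_of_maps_to (f := Quotient.mk _) (fun _ _ => mem_univ _) 3 ?_
  rintro ⟨x⟩ -
  refine le_of_eq_of_le ?_ (card_le_card (s := {x, f x, f (f x)}) ?_)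
  · exact (card_eq_three.mpr ⟨_, _, _, (h1 x).symm, (h2 x).symm, (h1 (f x)).symm, rfl⟩).symm
  · simp only [insert_subset_iff, singleton_subset_iff, mem_filter, mem_univ, true_and]
    exact ⟨rfl, Quotient.sound (Perm.sameCycle_apply_left.mpr .rfl),
      Quotient.sound (Perm.sameCycle_apply_left.mpr (Perm.sameCycle_apply_left.mpr .rfl))⟩

theorem cycleCount_eq_card_of_sameCycle_iff {β : Type*} (f : Perm α) (g : α → β)
    (hg : Function.Surjective g) (hf : ∀ x y, f.SameCycle x y ↔ g x = g y) :
    cycleCount f = Nat.card β :=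
  Nat.card_congr (Equiv.ofBijective (Quotient.lift g fun x y => (hf x y).mp)
    ⟨fun a b => Quotient.inductionOn₂ a b fun x y h => Quotient.sound ((hf x y).mpr h),
      fun b => let ⟨x, hx⟩ := hg b; ⟨⟦x⟧, hx⟩⟩)

theorem sameCycle_of_semiconj {β : Type*} [Finite α] {f : Perm α} {g : Perm β} {φ : α → β}
    (h : Function.Semiconj φ f g) {x y : α} (hxy : f.SameCycle x y) :
    g.SameCycle (φ x) (φ y) := by
  obtain ⟨n, rfl⟩ := hxy.exists_nat_pow_eq
  exact ⟨n, by rw [zpow_natCast, ← Perm.iterate_eq_pow, ← Perm.iterate_eq_pow,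
    (h.iterate_right n).eq]⟩

end CycleCount

namespace Scheme

variable (σ : Scheme H)

theorem rot_symm_fst (d : H.Dart) : (σ.rot.symm d).fst = d.fst := by
  simpa using (σ.rot_fst (σ.rot.symm d)).symm

theorem flip_fst (p : H.Dart × Bool) : (σ.flip p).1.fst = p.1.snd := rfl

theorem flip_flip (p : H.Dart × Bool) : σ.flip (σ.flip p) = p :=
  Function.Involutive.toPerm_involutive _ p

theorem step_fst (p : H.Dart × Bool) : (σ.step p).1.fst = p.1.fst := by
  obtain ⟨d, _ | _⟩ := p
  exacts [σ.rot_symm_fst d, σ.rot_fst d]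

theorem facePerm_apply (p : H.Dart × Bool) : σ.facePerm p = σ.step (σ.flip p) := rfl

theorem rot_ne_self {d : H.Dart} (h : ∃ e : H.Dart, e.fst = d.fst ∧ e ≠ d) : σ.rot d ≠ d := by
  intro hd
  obtain ⟨e, he, hne⟩ := h
  obtain ⟨i, hi⟩ := σ.rot_single d e he.symm
  rw [Perm.zpow_apply_eq_self_of_apply_eq_self hd] at hi
  exact hne hi.symm

theorem step_ne_self (hrot : ∀ d, σ.rot d ≠ d) (p : H.Dart × Bool) : σ.step p ≠ p := by
  obtain ⟨d, _ | _⟩ := p <;> simp only [step, coe_fn_mk, cond_false, cond_true, ne_eq,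
    Prod.mk.injEq, and_true]
  · exact fun h => hrot d (by simpa using congrArg σ.rot h.symm)
  · exact hrot d

theorem facePerm_ne_self (p : H.Dart × Bool) : σ.facePerm p ≠ p := fun h =>
  p.1.adj.ne ((σ.step_fst (σ.flip p)).symm.trans (congrArg (·.1.fst) h)).symm

/-- A face of length two would run back and forth along one edge, which forces the rotation to
fix a dart. -/
theorem facePerm_facePerm_ne_self (hrot : ∀ d, σ.rot d ≠ d) (p : H.Dart × Bool) :
    σ.facePerm (σ.facePerm p) ≠ p := by
  obtain ⟨q, rfl⟩ := σ.flip.surjective p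
  rw [facePerm_apply, facePerm_apply, flip_flip]
  intro h
  have hsnd : (σ.step q).1.snd = q.1.snd := by
    simpa only [step_fst, flip_fst] using congrArg (·.1.fst) h
  exact σ.step_ne_self hrot q (Prod.ext (Dart.ext _ _ (Prod.ext (σ.step_fst q) hsnd)) rfl)

theorem card_dart_le [Finite V] (hrot : ∀ d, σ.rot d ≠ d) :
    (Nat.card H.Dart : ℤ) ≤ 6 * (Nat.card V + σ.eulerGenus - 2) := by
  classical
  have := Fintype.ofFinite V
  have hfaces := three_mul_cycleCount_le σ.facePerm σ.facePerm_ne_self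
    (σ.facePerm_facePerm_ne_self hrot)
  have heven : Nat.card H.Dart = 2 * H.edgeFinset.card := by
    rw [Nat.card_eq_fintype_card, dart_card_eq_twice_card_edges]
  rw [Nat.card_prod, Nat.card_eq_two_iff.mpr ⟨false, true, by simp⟩] at hfaces
  unfold eulerGenus faceCount
  omega

end Scheme

theorem embedsWithCrosscaps_crosscap (h : crosscap G ≠ 0) : EmbedsWithCrosscaps G (crosscap G) :=
  Nat.sInf_mem (Set.nonempty_iff_ne_empty.mpr fun he => h (Nat.sInf_eq_zero.mpr (Or.inr he)))

theorem EmbedsWithCrosscaps.crosscap_eq_zero (h : EmbedsWithCrosscaps G 0) : crosscap G = 0 :=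
  Nat.sInf_eq_zero.mpr (Or.inl h)

theorem EmbedsWithCrosscaps.exists_card_neighborSet_lt_six [Finite V] [Nonempty V]
    (h : EmbedsWithCrosscaps G 1) : ∃ v, Nat.card (G.neighborSet v) < 6 := by
  classical
  have := Fintype.ofFinite V
  by_contra! hdeg
  obtain ⟨H, hGH, -, σ, hσ, -⟩ := h
  have hrot : ∀ d, σ.rot d ≠ d := fun d => σ.rot_ne_self <| by
    obtain ⟨y, hy, hne⟩ := Set.exists_ne_of_one_lt_ncard
      (s := G.neighborSet d.fst) (lt_of_lt_of_le (by norm_num) (hdeg d.fst)) d.snd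
    exact ⟨⟨(d.fst, y), hGH hy⟩, rfl, fun h => hne (congrArg (·.snd) h)⟩
  have hGdarts : 6 * Nat.card V ≤ Nat.card G.Dart := by
    rw [Nat.card_eq_fintype_card, Nat.card_eq_fintype_card, dart_card_eq_sum_degrees,
      ← card_univ, mul_comm, ← smul_eq_mul, ← sum_const]
    exact sum_le_sum fun v _ => by simpa [← card_neighborSet_eq_degree] using hdeg v
  have hHdarts : Nat.card G.Dart ≤ Nat.card H.Dart := Nat.card_le_card_of_injective
    (Hom.ofLE hGH).mapDart fun _ _ h => Dart.ext _ _ (congrArg (fun d : H.Dart => d.toProd) h)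
  have hEuler := σ.card_dart_le hrot
  rw [hσ] at hEuler
  have := Nat.card_pos (α := V)
  omega

section Star

variable {W : Type*} {c : W}

theorem starGraph_dart_fst_or_snd (d : (starGraph c).Dart) : d.fst = c ∨ d.snd = c :=
  (starGraph_adj.mp d.adj).2

variable (c) in
def outDart (t : {y // y ≠ c}) : (starGraph c).Dart :=
  ⟨(c, t), starGraph_center_adj t.2.symm⟩

variable (c) in
def outDartEquiv : {y // y ≠ c} ≃ {d : (starGraph c).Dart // d.fst = c} where
  toFun t := ⟨outDart c t, rfl⟩
  invFun d := ⟨d.1.snd, fun h => d.1.adj.ne (d.2.trans h.symm)⟩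
  left_inv _ := rfl
  right_inv d := Subtype.ext (Dart.ext _ _ (Prod.ext d.2.symm rfl))

theorem exists_eq_outDart (d : (starGraph c).Dart) :
    ∃ t, d = outDart c t ∨ d = (outDart c t).symm := by
  rcases starGraph_dart_fst_or_snd d with h | h
  · exact ⟨⟨d.snd, fun h' => d.adj.ne (h.trans h'.symm)⟩, Or.inl (Dart.ext _ _ (Prod.ext h rfl))⟩
  · exact ⟨⟨d.fst, fun h' => d.adj.ne (h'.trans h.symm)⟩, Or.inr (Dart.ext _ _ (Prod.ext rfl h))⟩

variable [DecidableEq W] (ρ : Perm {y // y ≠ c}) (hρ : ∀ t t', ρ.SameCycle t t')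

/-- The star embedded in the sphere: the spokes are arranged around the centre in the cyclic
order of `ρ`. -/
def starScheme : Scheme (starGraph c) where
  rot := ρ.extendDomain (outDartEquiv c)
  rot_fst d := by
    by_cases h : d.fst = c
    · rw [Perm.extendDomain_apply_subtype ρ (outDartEquiv c) h]
      exact h.symm
    · rw [Perm.extendDomain_apply_not_subtype ρ (outDartEquiv c) h]
  rot_single d e hde := by
    by_cases h : d.fst = c
    · simpa using (hρ ((outDartEquiv c).symm ⟨d, h⟩)
        ((outDartEquiv c).symm ⟨e, hde ▸ h⟩)).extendDomain (f := outDartEquiv c)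
    · have hd := (starGraph_dart_fst_or_snd d).resolve_left h
      have he := (starGraph_dart_fst_or_snd e).resolve_left (hde ▸ h)
      exact (Dart.ext _ _ (Prod.ext hde (hd.trans he.symm))).sameCycle _
  sgn _ := false
  sgn_symm _ := rfl

theorem starScheme_rot_outDart (t : {y // y ≠ c}) :
    (starScheme ρ hρ).rot (outDart c t) = outDart c (ρ t) :=
  Perm.extendDomain_apply_image ρ (outDartEquiv c) t

theorem starScheme_rot_outDart_symm (t : {y // y ≠ c}) :
    (starScheme ρ hρ).rot (outDart c t).symm = (outDart c t).symm :=
  Perm.extendDomain_apply_not_subtype ρ (outDartEquiv c) t.2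

theorem starScheme_facePerm_snd (p : (starGraph c).Dart × Bool) :
    ((starScheme ρ hρ).facePerm p).2 = p.2 :=
  Bool.xor_false p.2

theorem starScheme_facePerm_outDart (t : {y // y ≠ c}) (b : Bool) :
    (starScheme ρ hρ).facePerm (outDart c t, b) = ((outDart c t).symm, b) := by
  have hfix := starScheme_rot_outDart_symm ρ hρ t
  cases b
  · change ((starScheme ρ hρ).rot.symm (outDart c t).symm, false) = _
    rw [(starScheme ρ hρ).rot.symm_apply_eq.mpr hfix.symm]
  · change ((starScheme ρ hρ).rot (outDart c t).symm, true) = _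
    rw [hfix]

theorem starScheme_facePerm_facePerm_outDart (t : {y // y ≠ c}) (b : Bool) :
    (starScheme ρ hρ).facePerm ((starScheme ρ hρ).facePerm (outDart c t, b)) =
      (outDart c (cond b ρ ρ.symm t), b) := by
  rw [starScheme_facePerm_outDart]
  cases b
  · change ((starScheme ρ hρ).rot.symm (outDart c t), false) = _
    refine congrArg (·, false) ((starScheme ρ hρ).rot.symm_apply_eq.mpr ?_)
    rw [cond_false, starScheme_rot_outDart, apply_symm_apply]
  · exact congrArg (·, true) (starScheme_rot_outDart ρ hρ t)

theorem cycleCount_starScheme_facePerm [Finite W] (t₀ : {y // y ≠ c}) :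
    cycleCount (starScheme ρ hρ).facePerm = 2 := by
  have := Fintype.ofFinite W
  set F := (starScheme ρ hρ).facePerm
  have hout (t t' : {y // y ≠ c}) (b : Bool) : F.SameCycle (outDart c t, b) (outDart c t', b) := by
    refine Perm.SameCycle.of_pow (n := 2) (sameCycle_of_semiconj (f := cond b ρ ρ.symm)
      (φ := fun t => (outDart c t, b)) (fun s => ?_) ?_)
    · rw [pow_two, Perm.mul_apply, starScheme_facePerm_facePerm_outDart]
    · cases b
      exacts [(hρ t t').inv, hρ t t']
  have hdart (d : (starGraph c).Dart) (b : Bool) : ∃ t, F.SameCycle (d, b) (outDart c t, b) := by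
    obtain ⟨t, rfl | rfl⟩ := exists_eq_outDart d
    · exact ⟨t, .rfl⟩
    · refine ⟨t, ?_⟩
      rw [← starScheme_facePerm_outDart]
      exact Perm.sameCycle_apply_left.mpr .rfl
  rw [cycleCount_eq_card_of_sameCycle_iff F Prod.snd (fun b => ⟨(outDart c t₀, b), rfl⟩),
    Nat.card_eq_fintype_card, Fintype.card_bool]
  rintro ⟨d, b⟩ ⟨e, b'⟩
  refine ⟨fun h => Perm.sameCycle_one.mp (sameCycle_of_semiconj (g := 1)
    (starScheme_facePerm_snd ρ hρ) h), fun (h : b = b') => ?_⟩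
  subst h
  obtain ⟨t, ht⟩ := hdart d b
  obtain ⟨t', ht'⟩ := hdart e b
  exact ht.trans ((hout t t' b).trans ht'.symm)

theorem eulerGenus_starScheme [Finite W] (t₀ : {y // y ≠ c}) :
    (starScheme ρ hρ).eulerGenus = 0 := by
  have := Fintype.ofFinite W
  have htree := (isTree_starGraph c).card_edgeFinset
  unfold Scheme.eulerGenus Scheme.faceCount
  rw [cycleCount_starScheme_facePerm ρ hρ t₀, Nat.card_eq_fintype_card (α := (starGraph c).Dart),
    dart_card_eq_twice_card_edges, Nat.card_eq_fintype_card]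
  omega

end Star

theorem embedsWithCrosscaps_bot {W : Type*} [Finite W] [Nontrivial W] :
    EmbedsWithCrosscaps (⊥ : SimpleGraph W) 0 := by
  classical
  have := Fintype.ofFinite W
  obtain ⟨c⟩ : Nonempty W := inferInstance
  obtain ⟨y, hy⟩ := exists_ne c
  obtain ⟨ρ, hρ, -⟩ := (univ : Finset {y // y ≠ c}).exists_cycleOn
  exact ⟨starGraph c, bot_le, (connected_starGraph c).preconnected,
    starScheme ρ fun t t' => hρ.2 (by simp) (by simp), eulerGenus_starScheme _ _ ⟨y, hy⟩,
    Or.inl rfl⟩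

theorem unitGammaGraph_empty {R : Type*} [CommRing R] (hS : (∅ : Set Rˣ)⁻¹ ⊆ ∅) :
    unitGammaGraph R ∅ hS = ⊥ := by
  ext x y
  simp [unitGammaGraph, gammaGraph]

theorem card_units_sub_one_le_card_neighborSet {R : Type*} [CommRing R] [Finite R] {S : Set Rˣ}
    (hS : S⁻¹ ⊆ S) {s : Rˣ} (hs : s ∈ S) (x : R) :
    Nat.card Rˣ - 1 ≤ Nat.card ((unitGammaGraph R S hS).neighborSet x) := by
  classical
  have := Fintype.ofFinite R
  set f : Rˣ → R := fun u => ↑s⁻¹ * (u - x)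
  have hf : Function.Injective f := fun u v h => Units.ext (by simpa [f] using h)
  have hsub : (univ.image f).erase x ⊆ ((unitGammaGraph R S hS).neighborSet x).toFinset := by
    simp only [subset_iff, mem_erase, mem_image, mem_univ, true_and, Set.mem_toFinset,
      SimpleGraph.mem_neighborSet]
    rintro _ ⟨hne, u, rfl⟩
    exact ⟨hne.symm, s, hs, u, Subgroup.mem_top u, by simp [f]⟩
  calc Nat.card Rˣ - 1 = #(univ.image f) - 1 := by
        rw [card_image_of_injective _ hf, card_univ, Nat.card_eq_fintype_card]
    _ ≤ #((univ.image f).erase x) := pred_card_le_card_erase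
    _ ≤ Nat.card ((unitGammaGraph R S hS).neighborSet x) := by
        rw [Nat.card_eq_card_toFinset]
        exact card_le_card hsub

end CrosscapDef

open CrosscapDef in
/-- If `R` is a finite local commutative ring with `γ̃(Γ(R, S)) = 1`, then `|R| ≤ 9`, and if
`R` is a field then `|R| ≤ 7`. -/
theorem card_le_of_local_crosscap_eq_one {R : Type*} [CommRing R] [Finite R] [IsLocalRing R]
    (S : Set Rˣ) (hS : S⁻¹ ⊆ S) (h : crosscap (unitGammaGraph R S hS) = 1) :
    Nat.card R ≤ 9 ∧ (IsField R → Nat.card R ≤ 7) := by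
  obtain rfl | ⟨s, hs⟩ := S.eq_empty_or_nonempty
  · rw [unitGammaGraph_empty, embedsWithCrosscaps_bot.crosscap_eq_zero] at h
    exact absurd h zero_ne_one
  have hU : Nat.card Rˣ ≤ 6 := by
    have hemb : EmbedsWithCrosscaps (unitGammaGraph R S hS) 1 :=
      h ▸ embedsWithCrosscaps_crosscap (by omega)
    obtain ⟨x, hx⟩ := hemb.exists_card_neighborSet_lt_six
    have := card_units_sub_one_le_card_neighborSet hS hs x
    omega
  refine ⟨IsLocalRing.card_le_nine_of_card_units_le_six hU, fun hR => ?_⟩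
  have := IsLocalRing.card_units_add_card_maximalIdeal R
  rw [IsLocalRing.card_maximalIdeal_of_isField R hR] at this
  omega
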